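/- Let θ₁(u;τ) = -i ∑_{n∈ℤ} (-1)^n e^{πi(n+1/2)²τ + 2πiu(n+1/2)}. Then for any positive integer K, u ∈ ℂ, τ ∈ ℍ: θ₁(u; τ/K) = ∑_{n=0}^{K-1} q^{(n-(K-1)/2)²/(2K)} e^{2πi(n-(K-1)/2)(u+1/2)} θ₁(Ku + τ(n - (K-1)/2) + (K-1)/2; Kτ), where q = e^{2πiτ}. -/

import Mathlib

open scoped BigOperators
open Complex

/-- The Jacobi theta function
`θ₁(u;τ) = -i ∑_{n∈ℤ} (-1)^n e^{πi(n+1/2)²τ + 2πiu(n+1/2)}`. -/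
noncomputable def theta1 (u τ : ℂ) : ℂ :=
  -I * ∑' n : ℤ,
    (-1 : ℂ) ^ n *
      Complex.exp ((Real.pi : ℂ) * I * ((n : ℂ) + 1 / 2) ^ 2 * τ +
        2 * (Real.pi : ℂ) * I * u * ((n : ℂ) + 1 / 2))

theorem Int.tsum_eq_sum_range_tsum_mul_add {R : Type*} [AddCommGroup R] [UniformSpace R]
    [IsUniformAddGroup R] [CompleteSpace R] [T0Space R] {f : ℤ → R} (hf : Summable f)
    (K : ℕ) [NeZero K] :
    ∑' m, f m = ∑ n ∈ Finset.range K, ∑' j : ℤ, f (j * K + n) := by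
  set e : ℤ ≃ Fin K × ℤ := (Int.divModEquiv K).trans (Equiv.prodComm _ _)
  rw [← e.symm.tsum_eq f, Summable.tsum_prod, tsum_fintype,
    ← Fin.sum_univ_eq_sum_range (fun n => ∑' j : ℤ, f (j * K + n))]
  · rfl
  · exact hf.comp_injective e.symm.injective

namespace Theta1

noncomputable def term (u τ : ℂ) (n : ℤ) : ℂ :=
  (-1 : ℂ) ^ n *
    Complex.exp ((Real.pi : ℂ) * I * ((n : ℂ) + 1 / 2) ^ 2 * τ +
      2 * (Real.pi : ℂ) * I * u * ((n : ℂ) + 1 / 2))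

theorem theta1_eq_tsum_term (u τ : ℂ) : theta1 u τ = -I * ∑' n : ℤ, term u τ n := rfl

theorem neg_one_zpow_eq_exp (m : ℤ) : (-1 : ℂ) ^ m = Complex.exp ((Real.pi : ℂ) * I * m) := by
  rw [mul_comm, Complex.exp_int_mul, Complex.exp_pi_mul_I]

theorem term_eq_mul_jacobiTheta₂_term (u τ : ℂ) (n : ℤ) :
    term u τ n = Complex.exp ((Real.pi : ℂ) * I * τ / 4 + (Real.pi : ℂ) * I * u) *
      jacobiTheta₂_term n (u + τ / 2 + 1 / 2) τ := by
  rw [term, jacobiTheta₂_term, neg_one_zpow_eq_exp, ← Complex.exp_add, ← Complex.exp_add]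
  ring_nf

theorem summable_term (u : ℂ) {τ : ℂ} (hτ : 0 < τ.im) : Summable (term u τ) := by
  simpa only [← term_eq_mul_jacobiTheta₂_term] using
    ((summable_jacobiTheta₂_term_iff (u + τ / 2 + 1 / 2) τ).mpr hτ).mul_left
      (Complex.exp ((Real.pi : ℂ) * I * τ / 4 + (Real.pi : ℂ) * I * u))

/-- Completing the square in `(jK + n + 1/2)² / K` with `a = n - (K-1)/2` gives
`K (j + 1/2)² + 2 (j + 1/2) a + a² / K`. -/
theorem term_mul_add (K : ℕ) (hK : K ≠ 0) (u τ : ℂ) (n : ℕ) (j : ℤ) :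
    term u (τ / K) (j * K + n) =
      Complex.exp (2 * (Real.pi : ℂ) * I * τ *
          (((n : ℂ) - ((K : ℂ) - 1) / 2) ^ 2 / (2 * K))) *
        Complex.exp (2 * (Real.pi : ℂ) * I * ((n : ℂ) - ((K : ℂ) - 1) / 2) * (u + 1 / 2)) *
        term ((K : ℂ) * u + τ * ((n : ℂ) - ((K : ℂ) - 1) / 2) + ((K : ℂ) - 1) / 2)
          ((K : ℂ) * τ) j := by
  have hKC : (K : ℂ) ≠ 0 := Nat.cast_ne_zero.mpr hK
  simp only [term, neg_one_zpow_eq_exp, ← Complex.exp_add]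
  congr 1
  push_cast
  field_simp
  ring

end Theta1

open Theta1 in
theorem theta1_tau_div_K (K : ℕ) (hK : 0 < K) (u τ : ℂ) (hτ : 0 < τ.im) :
    theta1 u (τ / K) =
      ∑ n ∈ Finset.range K,
        Complex.exp (2 * (Real.pi : ℂ) * I * τ *
            (((n : ℂ) - ((K : ℂ) - 1) / 2) ^ 2 / (2 * K))) *
          Complex.exp (2 * (Real.pi : ℂ) * I * ((n : ℂ) - ((K : ℂ) - 1) / 2) * (u + 1 / 2)) *
          theta1 ((K : ℂ) * u + τ * ((n : ℂ) - ((K : ℂ) - 1) / 2) + ((K : ℂ) - 1) / 2)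
            ((K : ℂ) * τ) := by
  have : NeZero K := ⟨hK.ne'⟩
  have hτK : 0 < (τ / K).im := by rw [Complex.div_natCast_im]; positivity
  rw [theta1_eq_tsum_term, Int.tsum_eq_sum_range_tsum_mul_add (summable_term u hτK) K,
    Finset.mul_sum]
  refine Finset.sum_congr rfl fun n _ => ?_
  simp only [theta1_eq_tsum_term, term_mul_add K hK.ne', tsum_mul_left]
  ring
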